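/- A plane in ℝ³ projects under the quotient map ℝ³ → ℝ³/ℤ³ to a compact subset (a 2-torus) if and only if the plane has two linearly independent direction vectors each of which is a real scalar multiple of a nonzero integer vector. -/
import Mathlib

open Matrix Set Submodule

/-- The quotient map `ℝ³ → 𝕋³ = ℝ³/ℤ³`. -/
noncomputable def torusProj (x : Fin 3 → ℝ) : Fin 3 → AddCircle (1 : ℝ) :=
  fun i => (x i : AddCircle (1 : ℝ))

lemma torusProj_continuous : Continuous torusProj := by
  refine continuous_pi fun i => ?_
  exact (AddCircle.continuous_mk' 1).comp (continuous_apply i)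

lemma torusProj_add_int (x : Fin 3 → ℝ) (w : Fin 3 → ℤ) :
    torusProj (x + fun i => (w i : ℝ)) = torusProj x := by
  funext i
  show ((x i + (w i : ℝ) : ℝ) : AddCircle (1 : ℝ)) = (x i : AddCircle (1 : ℝ))
  have h : ((w i : ℝ) : AddCircle (1 : ℝ)) = 0 :=
    (AddCircle.coe_eq_zero_iff 1).mpr ⟨w i, by simp⟩
  rw [QuotientAddGroup.mk_add, h, add_zero]

lemma torusProj_eq_iff {x y : Fin 3 → ℝ} (h : torusProj x = torusProj y) :
    ∃ w : Fin 3 → ℤ, x = y + fun i => (w i : ℝ) := by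
  have h' : ∀ i, ∃ k : ℤ, x i - y i = k := by
    intro i
    have hi : ((x i - y i : ℝ) : AddCircle (1 : ℝ)) = 0 := by
      rw [QuotientAddGroup.mk_sub]
      have := congrFun h i
      simp only [torusProj] at this
      rw [this, sub_self]
    rcases (AddCircle.coe_eq_zero_iff 1).mp hi with ⟨k, hk⟩
    exact ⟨k, by simpa using hk.symm⟩
  choose w hw using h'
  exact ⟨w, by funext i; have := hw i; simpa [eq_sub_iff_add_eq, Pi.add_apply] using by linarith⟩

lemma range_pair {α : Type*} (a b : α) : Set.range ![a, b] = {a, b} := by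
  ext x
  constructor
  · rintro ⟨i, rfl⟩; fin_cases i <;> simp
  · rintro (rfl | rfl)
    · exact ⟨0, rfl⟩
    · exact ⟨1, rfl⟩

lemma exists_int_pair (m : Fin 3 → ℤ) (hm : m ≠ 0) :
    ∃ u v : Fin 3 → ℤ, u ≠ 0 ∧ v ≠ 0 ∧
      LinearIndependent ℝ ![(fun i => (u i : ℝ)), (fun i => (v i : ℝ))] ∧
      (∑ i, (m i : ℝ) * (u i : ℝ)) = 0 ∧ (∑ i, (m i : ℝ) * (v i : ℝ)) = 0 := by
  rcases Function.ne_iff.mp hm with ⟨j, hj⟩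
  have key : ∀ (u v : Fin 3 → ℤ), (∃ i, u i = m j ∨ u i = -m j) → (∃ i, v i = m j ∨ v i = -m j) → True := fun _ _ _ _ => trivial
  clear key
  fin_cases j
  · refine ⟨![-(m 2), 0, m 0], ![m 1, -(m 0), 0], ?_, ?_, ?_, ?_, ?_⟩
    · intro h; exact hj (by simpa using congrFun h 2)
    · intro h; apply hj; have := congrFun h 1; simpa using (neg_eq_zero.mp (by simpa using this))
    · rw [LinearIndependent.pair_iff]
      intro s t hst
      have h1 := congrFun hst 1
      have h2 := congrFun hst 2
      have hj' : m 0 ≠ 0 := by simpa using hj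
      simp [Fin.isValue] at h1 h2
      exact ⟨h2.resolve_right hj', h1.resolve_right hj'⟩
    · simp [Fin.sum_univ_three]; ring
    · simp [Fin.sum_univ_three]; ring
  · refine ⟨![0, m 2, -(m 1)], ![m 1, -(m 0), 0], ?_, ?_, ?_, ?_, ?_⟩
    · intro h; apply hj; have := congrFun h 2; simpa using (neg_eq_zero.mp (by simpa using this))
    · intro h; exact hj (by simpa using congrFun h 0)
    · rw [LinearIndependent.pair_iff]
      intro s t hst
      have h0 := congrFun hst 0
      have h2 := congrFun hst 2
      have hj' : m 1 ≠ 0 := by simpa using hj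
      simp [Fin.isValue] at h0 h2
      exact ⟨h2.resolve_right hj', h0.resolve_right hj'⟩
    · simp [Fin.sum_univ_three]; ring
    · simp [Fin.sum_univ_three]; ring
  · refine ⟨![0, m 2, -(m 1)], ![-(m 2), 0, m 0], ?_, ?_, ?_, ?_, ?_⟩
    · intro h; exact hj (by simpa using congrFun h 1)
    · intro h; apply hj; have := congrFun h 0; simpa using (neg_eq_zero.mp (by simpa using this))
    · rw [LinearIndependent.pair_iff]
      intro s t hst
      have h0 := congrFun hst 0
      have h1 := congrFun hst 1
      have hj' : m 2 ≠ 0 := by simpa using hj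
      simp [Fin.isValue] at h0 h1
      exact ⟨h1.resolve_right hj', h0.resolve_right hj'⟩
    · simp [Fin.sum_univ_three]; ring
    · simp [Fin.sum_univ_three]; ring

/-- A plane `{p + t • d₁ + s • d₂}` in `ℝ³` projects to a compact subset of the 3-torus if and
only if the plane has two linearly independent direction vectors, each of which is a real
scalar multiple of a nonzero integer vector. -/
theorem plane_proj_isCompact_iff (p d₁ d₂ : Fin 3 → ℝ)
    (hind : LinearIndependent ℝ ![d₁, d₂]) :
    IsCompact (torusProj '' {x | ∃ t s : ℝ, x = p + t • d₁ + s • d₂}) ↔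
      ∃ e₁ e₂ : Fin 3 → ℝ,
        e₁ ∈ Submodule.span ℝ ({d₁, d₂} : Set (Fin 3 → ℝ)) ∧
        e₂ ∈ Submodule.span ℝ ({d₁, d₂} : Set (Fin 3 → ℝ)) ∧
        LinearIndependent ℝ ![e₁, e₂] ∧
        (∃ (c : ℝ) (v : Fin 3 → ℤ), v ≠ 0 ∧ e₁ = c • fun i => (v i : ℝ)) ∧
        (∃ (c : ℝ) (v : Fin 3 → ℤ), v ≠ 0 ∧ e₂ = c • fun i => (v i : ℝ)) := by
  classical
  haveI : Fact ((0:ℝ) < 1) := ⟨one_pos⟩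
  have hspanrank : Module.finrank ℝ (span ℝ ({d₁, d₂} : Set (Fin 3 → ℝ))) = 2 := by
    rw [← range_pair d₁ d₂]
    simpa using finrank_span_eq_card hind
  constructor
  · intro hcomp
    set n : Fin 3 → ℝ := crossProduct d₁ d₂ with hn_def
    have hn : n ≠ 0 := crossProduct_ne_zero_iff_linearIndependent.mpr hind
    let f : (Fin 3 → ℝ) →ₗ[ℝ] ℝ :=
      { toFun := fun x => n ⬝ᵥ x
        map_add' := fun a b => dotProduct_add n a b
        map_smul' := fun c a => by simpa using dotProduct_smul c n a }
    have hf_apply : ∀ x, f x = n ⬝ᵥ x := fun _ => rfl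
    have hfd₁ : f d₁ = 0 := by rw [hf_apply, dotProduct_comm]; exact dot_self_cross d₁ d₂
    have hfd₂ : f d₂ = 0 := by rw [hf_apply, dotProduct_comm]; exact dot_cross_self d₁ d₂
    have hnn : n ⬝ᵥ n ≠ 0 := fun h => hn (dotProduct_self_eq_zero.mp h)
    have hsurj : Function.Surjective f := by
      intro r
      refine ⟨(r / (n ⬝ᵥ n)) • n, ?_⟩
      rw [hf_apply, dotProduct_smul, smul_eq_mul, div_mul_cancel₀ _ hnn]
    have hkerrank : Module.finrank ℝ (LinearMap.ker f) = 2 := by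
      have h := LinearMap.finrank_range_add_finrank_ker f
      rw [LinearMap.range_eq_top.mpr hsurj] at h
      simp [finrank_top] at h
      omega
    have hker : span ℝ ({d₁, d₂} : Set (Fin 3 → ℝ)) = LinearMap.ker f := by
      apply Submodule.eq_of_le_of_finrank_le
      · rw [span_le]
        intro x hx
        rcases Set.mem_insert_iff.mp hx with rfl | hx
        · exact LinearMap.mem_ker.mpr hfd₁
        · rw [Set.mem_singleton_iff.mp hx]
          exact LinearMap.mem_ker.mpr hfd₂
      · rw [hkerrank, hspanrank]
    have himcl : IsClosed (torusProj '' {x | ∃ t s : ℝ, x = p + t • d₁ + s • d₂}) :=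
      hcomp.isClosed
    have hG'closed : IsClosed
        {x : Fin 3 → ℝ | ∃ t s : ℝ, ∃ w : Fin 3 → ℤ, x = t • d₁ + s • d₂ + fun i => (w i : ℝ)} := by
      have hpre : torusProj ⁻¹' (torusProj '' {x | ∃ t s : ℝ, x = p + t • d₁ + s • d₂}) =
          {x : Fin 3 → ℝ | ∃ t s : ℝ, ∃ w : Fin 3 → ℤ,
            x = p + t • d₁ + s • d₂ + fun i => (w i : ℝ)} := by
        ext x
        constructor
        · rintro ⟨y, ⟨t, s, rfl⟩, hxy⟩
          rcases torusProj_eq_iff hxy.symm with ⟨w, hw⟩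
          exact ⟨t, s, w, hw⟩
        · rintro ⟨t, s, w, rfl⟩
          exact ⟨p + t • d₁ + s • d₂, ⟨t, s, rfl⟩, (torusProj_add_int _ w).symm⟩
      have h1 : IsClosed {x : Fin 3 → ℝ | ∃ t s : ℝ, ∃ w : Fin 3 → ℤ,
          x = p + t • d₁ + s • d₂ + fun i => (w i : ℝ)} := by
        rw [← hpre]; exact himcl.preimage torusProj_continuous
      have h2 : {x : Fin 3 → ℝ | ∃ t s : ℝ, ∃ w : Fin 3 → ℤ,
            x = t • d₁ + s • d₂ + fun i => (w i : ℝ)} =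
          (fun x => x + p) ⁻¹' {x : Fin 3 → ℝ | ∃ t s : ℝ, ∃ w : Fin 3 → ℤ,
            x = p + t • d₁ + s • d₂ + fun i => (w i : ℝ)} := by
        ext x
        simp only [Set.mem_setOf_eq, Set.mem_preimage]
        constructor
        · rintro ⟨t, s, w, rfl⟩; exact ⟨t, s, w, by abel⟩
        · rintro ⟨t, s, w, h⟩
          refine ⟨t, s, w, ?_⟩
          have hx : x = p + t • d₁ + s • d₂ + (fun i => (w i : ℝ)) - p := by
            rw [← h]; abel
          rw [hx]; abel
      rw [h2]
      exact h1.preimage (continuous_id.add continuous_const)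
    let g : (Fin 3 → ℤ) →+ ℝ := AddMonoidHom.mk' (fun w => f fun i => (w i : ℝ))
      (fun u v => by
        show (f fun i => (((u + v) i : ℤ) : ℝ)) =
          (f fun i => ((u i : ℤ) : ℝ)) + f fun i => ((v i : ℤ) : ℝ)
        rw [← map_add]
        congr 1
        funext i
        push_cast
        simp)
    let A : AddSubgroup ℝ := g.range
    have hApre : ⇑f ⁻¹' (A : Set ℝ) =
        {x : Fin 3 → ℝ | ∃ t s : ℝ, ∃ w : Fin 3 → ℤ, x = t • d₁ + s • d₂ + fun i => (w i : ℝ)} := by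
      ext x
      simp only [Set.mem_preimage, SetLike.mem_coe, AddMonoidHom.mem_range, Set.mem_setOf_eq]
      constructor
      · rintro ⟨w, hw⟩
        have hx : x - (fun i => (w i : ℝ)) ∈ LinearMap.ker f := by
          rw [LinearMap.mem_ker, map_sub]
          have hgw : g w = f fun i => (w i : ℝ) := rfl
          rw [← hgw, hw, sub_self]
        rw [← hker] at hx
        rcases mem_span_pair.mp hx with ⟨t, s, hts⟩
        refine ⟨t, s, w, ?_⟩
        have : x = (x - fun i => (w i : ℝ)) + fun i => (w i : ℝ) := by abel
        rw [this, ← hts]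
      · rintro ⟨t, s, w, rfl⟩
        refine ⟨w, ?_⟩
        show g w = f (t • d₁ + s • d₂ + fun i => (w i : ℝ))
        rw [map_add, map_add, _root_.map_smul, _root_.map_smul, hfd₁, hfd₂]
        simp only [smul_zero, zero_add]
        rfl
    have hAclosed : IsClosed (A : Set ℝ) := by
      have hopen : IsOpenMap ⇑f := by
        have h := ContinuousLinearMap.isOpenMap (LinearMap.toContinuousLinearMap f)
          (by rw [LinearMap.coe_toContinuousLinearMap']; exact hsurj)
        rwa [LinearMap.coe_toContinuousLinearMap'] at h
      have hcompl : (A : Set ℝ)ᶜ = ⇑f '' ((⇑f ⁻¹' (A : Set ℝ))ᶜ) := by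
        rw [← Set.preimage_compl, Set.image_preimage_eq _ hsurj]
      rw [← isOpen_compl_iff, hcompl]
      have hpc : IsClosed (⇑f ⁻¹' (A : Set ℝ)) := by rw [hApre]; exact hG'closed
      exact hopen _ hpc.isOpen_compl
    rcases A.dense_or_cyclic with hd | ⟨a, ha⟩
    · exfalso
      have huniv : (A : Set ℝ) = Set.univ := by
        rw [← hAclosed.closure_eq]; exact hd.closure_eq
      have hcnt : (Set.univ : Set ℝ).Countable := by
        rw [← huniv, AddMonoidHom.coe_range]
        exact Set.countable_range g
      exact Cardinal.not_countable_real hcnt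
    · have hmem : ∀ i : Fin 3, n i ∈ A := by
        intro i
        refine ⟨Pi.single i 1, ?_⟩
        have hgi : g (Pi.single i 1) = n ⬝ᵥ fun j => (((Pi.single i 1 : Fin 3 → ℤ) j : ℤ) : ℝ) := rfl
        rw [hgi]
        simp [dotProduct, Pi.single_apply, mul_ite]
      have hm' : ∀ i, ∃ mi : ℤ, mi • a = n i := fun i =>
        AddSubgroup.mem_closure_singleton.mp (by rw [← ha]; exact hmem i)
      choose m hm using hm'
      have hm0 : m ≠ 0 := by
        intro h
        apply hn
        funext i
        rw [← hm i, congrFun h i]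
        simp
      rcases exists_int_pair m hm0 with ⟨u, v, hu0, hv0, huv, hmu, hmv⟩
      have hnu : ∀ (w : Fin 3 → ℤ), (∑ i, (m i : ℝ) * (w i : ℝ)) = 0 →
          (fun i => (w i : ℝ)) ∈ span ℝ ({d₁, d₂} : Set (Fin 3 → ℝ)) := by
        intro w hw
        rw [hker, LinearMap.mem_ker, hf_apply]
        have hni : ∀ i, n i = (m i : ℝ) * a := fun i => by
          rw [← hm i]; simp [zsmul_eq_mul]
        simp only [dotProduct]
        calc ∑ i, n i * (w i : ℝ) = a * ∑ i, (m i : ℝ) * (w i : ℝ) := by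
              rw [Finset.mul_sum]
              exact Finset.sum_congr rfl fun i _ => by rw [hni i]; ring
          _ = 0 := by rw [hw, mul_zero]
      exact ⟨_, _, hnu u hmu, hnu v hmv, huv, ⟨1, u, hu0, (one_smul ℝ _).symm⟩,
        ⟨1, v, hv0, (one_smul ℝ _).symm⟩⟩
  · rintro ⟨e₁, e₂, he₁, he₂, hei, ⟨c₁, v₁, hv₁0, he₁eq⟩, ⟨c₂, v₂, hv₂0, he₂eq⟩⟩
    set V₁ : Fin 3 → ℝ := fun i => (v₁ i : ℝ) with hV₁
    set V₂ : Fin 3 → ℝ := fun i => (v₂ i : ℝ) with hV₂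
    have he₁0 : e₁ ≠ 0 := by have := hei.ne_zero 0; simpa using this
    have he₂0 : e₂ ≠ 0 := by have := hei.ne_zero 1; simpa using this
    have hc₁ : c₁ ≠ 0 := by rintro rfl; exact he₁0 (by rw [he₁eq, zero_smul])
    have hc₂ : c₂ ≠ 0 := by rintro rfl; exact he₂0 (by rw [he₂eq, zero_smul])
    have hespanrank : Module.finrank ℝ (span ℝ ({e₁, e₂} : Set (Fin 3 → ℝ))) = 2 := by
      rw [← range_pair e₁ e₂]
      simpa using finrank_span_eq_card hei
    have h1 : span ℝ ({e₁, e₂} : Set (Fin 3 → ℝ)) = span ℝ ({d₁, d₂} : Set (Fin 3 → ℝ)) := by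
      apply Submodule.eq_of_le_of_finrank_le
      · rw [span_le]
        intro x hx
        rcases Set.mem_insert_iff.mp hx with rfl | hx
        · exact he₁
        · rw [Set.mem_singleton_iff.mp hx]; exact he₂
      · rw [hspanrank, hespanrank]
    have h2 : span ℝ ({V₁, V₂} : Set (Fin 3 → ℝ)) = span ℝ ({e₁, e₂} : Set (Fin 3 → ℝ)) := by
      apply le_antisymm
      · rw [span_le]
        intro x hx
        rcases Set.mem_insert_iff.mp hx with rfl | hx
        · exact mem_span_pair.mpr ⟨c₁⁻¹, 0, by
            rw [he₁eq, zero_smul, add_zero, smul_smul, inv_mul_cancel₀ hc₁, one_smul]⟩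
        · rw [Set.mem_singleton_iff.mp hx]
          exact mem_span_pair.mpr ⟨0, c₂⁻¹, by
            rw [he₂eq, zero_smul, zero_add, smul_smul, inv_mul_cancel₀ hc₂, one_smul]⟩
      · rw [span_le]
        intro x hx
        rcases Set.mem_insert_iff.mp hx with rfl | hx
        · exact mem_span_pair.mpr ⟨c₁, 0, by rw [he₁eq, zero_smul, add_zero]⟩
        · rw [Set.mem_singleton_iff.mp hx]
          exact mem_span_pair.mpr ⟨0, c₂, by rw [he₂eq, zero_smul, zero_add]⟩
    have hspan : span ℝ ({V₁, V₂} : Set (Fin 3 → ℝ)) = span ℝ ({d₁, d₂} : Set (Fin 3 → ℝ)) :=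
      h2.trans h1
    have hSiff : ∀ x : Fin 3 → ℝ,
        (∃ t s : ℝ, x = p + t • d₁ + s • d₂) ↔ (∃ t s : ℝ, x = p + t • V₁ + s • V₂) := by
      intro x
      have hd : (∃ t s : ℝ, x = p + t • d₁ + s • d₂) ↔
          x - p ∈ span ℝ ({d₁, d₂} : Set (Fin 3 → ℝ)) := by
        rw [mem_span_pair]
        constructor
        · rintro ⟨t, s, rfl⟩; exact ⟨t, s, by abel⟩
        · rintro ⟨t, s, h⟩
          refine ⟨t, s, ?_⟩
          have hx : x = p + (t • d₁ + s • d₂) := sub_eq_iff_eq_add'.mp h.symm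
          rw [hx]; abel
      have hv : (∃ t s : ℝ, x = p + t • V₁ + s • V₂) ↔
          x - p ∈ span ℝ ({V₁, V₂} : Set (Fin 3 → ℝ)) := by
        rw [mem_span_pair]
        constructor
        · rintro ⟨t, s, rfl⟩; exact ⟨t, s, by abel⟩
        · rintro ⟨t, s, h⟩
          refine ⟨t, s, ?_⟩
          have hx : x = p + (t • V₁ + s • V₂) := sub_eq_iff_eq_add'.mp h.symm
          rw [hx]; abel
      rw [hd, hv, hspan]
    have hcont : Continuous fun q : ℝ × ℝ => p + q.1 • V₁ + q.2 • V₂ := by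
      apply Continuous.add
      apply Continuous.add continuous_const
      · exact continuous_fst.smul continuous_const
      · exact continuous_snd.smul continuous_const
    have hK : IsCompact ((fun q : ℝ × ℝ => p + q.1 • V₁ + q.2 • V₂) ''
        (Set.Icc 0 1 ×ˢ Set.Icc 0 1)) :=
      (isCompact_Icc.prod isCompact_Icc).image hcont
    have him : torusProj '' {x | ∃ t s : ℝ, x = p + t • d₁ + s • d₂} =
        torusProj '' ((fun q : ℝ × ℝ => p + q.1 • V₁ + q.2 • V₂) ''
          (Set.Icc 0 1 ×ˢ Set.Icc 0 1)) := by
      apply Set.Subset.antisymm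
      · rintro _ ⟨x, hx, rfl⟩
        rcases (hSiff x).mp hx with ⟨t, s, rfl⟩
        refine ⟨p + Int.fract t • V₁ + Int.fract s • V₂,
          ⟨(Int.fract t, Int.fract s),
            ⟨⟨Int.fract_nonneg t, (Int.fract_lt_one t).le⟩,
             ⟨Int.fract_nonneg s, (Int.fract_lt_one s).le⟩⟩, rfl⟩, ?_⟩
        have key : p + t • V₁ + s • V₂ = (p + Int.fract t • V₁ + Int.fract s • V₂) +
            fun i => (((⌊t⌋ • v₁ + ⌊s⌋ • v₂ : Fin 3 → ℤ) i : ℤ) : ℝ) := by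
          funext i
          simp only [Pi.add_apply, Pi.smul_apply, smul_eq_mul, Int.fract, hV₁, hV₂]
          push_cast
          ring
        rw [key, torusProj_add_int]
      · rintro _ ⟨_, ⟨⟨t, s⟩, _, rfl⟩, rfl⟩
        exact ⟨_, (hSiff _).mpr ⟨t, s, rfl⟩, rfl⟩
    rw [him]
    exact hK.image torusProj_continuous
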